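/- Let c₅ ∈ ℝ and let u, v : ℝ → ℝ be differentiable functions satisfying u′(t) = v(t) − u(t)² + c₅ and v′(t) = −u(t) for all t. Then the function t ↦ H(u(t), v(t)) is constant, where H(u,v) = e^{−2v}(u² − v − 1/2 − c₅). In other words, H is a first integral of the unperturbed blow-up system. -/

import Mathlib

open Real

/-- Hamiltonian of the unperturbed blow-up system. -/
noncomputable def Ham (c₅ u v : ℝ) : ℝ :=
  Real.exp (-2 * v) * (u ^ 2 - v - 1 / 2 - c₅)

theorem HasDerivAt.ham {c₅ u' v' t : ℝ} {u v : ℝ → ℝ}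
    (hu : HasDerivAt u u' t) (hv : HasDerivAt v v' t) :
    HasDerivAt (fun t => Ham c₅ (u t) (v t))
      (Real.exp (-2 * v t) *
        (2 * u t * u' - v' - 2 * v' * (u t ^ 2 - v t - 1 / 2 - c₅))) t := by
  have hexp : HasDerivAt (fun t => Real.exp (-2 * v t)) (Real.exp (-2 * v t) * (-2 * v')) t :=
    (hv.const_mul (-2)).exp
  have hpoly : HasDerivAt (fun t => u t ^ 2 - v t - 1 / 2 - c₅) (2 * u t * u' - v') t := by
    simpa using (((hu.pow 2).sub hv).sub_const (1 / 2)).sub_const c₅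
  exact (hexp.mul hpoly).congr_deriv (by ring)

/-- `H` is a first integral of the unperturbed blow-up system
`u̇ = v − u² + c₅`, `v̇ = −u`. -/
theorem ham_first_integral (c₅ : ℝ) (u v : ℝ → ℝ)
    (hu : ∀ t, HasDerivAt u (v t - u t ^ 2 + c₅) t)
    (hv : ∀ t, HasDerivAt v (-u t) t) :
    ∀ s t : ℝ, Ham c₅ (u s) (v s) = Ham c₅ (u t) (v t) := by
  have hderiv : ∀ t, HasDerivAt (fun t => Ham c₅ (u t) (v t)) 0 t := fun t =>
    ((hu t).ham (hv t)).congr_deriv (by ring)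
  exact is_const_of_deriv_eq_zero (fun t => (hderiv t).differentiableAt)
    (fun t => (hderiv t).deriv)
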